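/- arXiv:1511.03871 — 3 statements merged into one kernel-verified Lean document; each statement's English description precedes it below -/
import Mathlib

section
/- Let G be a finite group. Then every inner Hopf automorphism of the Drinfeld double DG (i.e. conjugation by a group-like element) is of the form e_g × h ↦ e_{tgt^{-1}} × tht^{-1} for some t ∈ G; in particular the group of inner Hopf automorphisms of DG is isomorphic to Inn(G). -/
open scoped BigOperators

/-- Multiplication of the Drinfeld double `DG`, written on coefficient functions
with respect to the basis `e_x × y`:
`(e_x × y)(e_{x'} × y') = δ_{x', y⁻¹ x y} (e_x × y y')`. -/
def DDmul (k G : Type*) [Field k] [Group G] [Fintype G] [DecidableEq G]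
    (f f' : G × G → k) : G × G → k :=
  fun p => ∑ y : G, f (p.1, y) * f' (y⁻¹ * p.1 * y, y⁻¹ * p.2)

/-- The basis element `e_g × h` of the Drinfeld double. -/
def DDbasis (k G : Type*) [Field k] [Group G] [DecidableEq G] (g h : G) : G × G → k :=
  fun p => if p.1 = g ∧ p.2 = h then 1 else 0

/-- The group-like element of `DG` corresponding to `(χ, t) ∈ Ĝ × G`,
namely `∑_x χ(x) (e_x × t)`. -/
def DDgroupLike (k G : Type*) [Field k] [Group G] [DecidableEq G]
    (χ : G →* kˣ) (t : G) : G × G → k :=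
  fun p => if p.2 = t then (χ p.1 : k) else 0

lemma DDkey (k G : Type*) [Field k] [Group G] [Fintype G] [DecidableEq G]
    (χ : G →* kˣ) (t g h : G) :
    DDmul k G (DDmul k G (DDgroupLike k G χ t) (DDbasis k G g h))
        (DDgroupLike k G χ⁻¹ t⁻¹)
      = DDbasis k G (t * g * t⁻¹) (t * h * t⁻¹) := by
  have hconj : ∀ (x y : G), (χ (x⁻¹ * y * x) : k) = χ y := by
    intro x y
    rw [map_mul, map_mul, map_inv]
    push_cast
    rw [mul_comm ((χ x : k)⁻¹) (χ y), mul_assoc, inv_mul_cancel₀ (Units.ne_zero (χ x)), mul_one]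
  funext p
  obtain ⟨a, b⟩ := p
  simp only [DDmul, DDgroupLike, DDbasis, ite_mul, mul_ite, zero_mul, mul_zero, one_mul,
    mul_one, Finset.sum_ite_eq, Finset.sum_ite_eq', Finset.mem_univ, if_true]
  have inner : ∀ x : G,
      (∑ x_1 : G, if x_1⁻¹ * a * x_1 = g ∧ x_1⁻¹ * x = h then
        if x_1 = t then (χ a : k) else 0 else 0)
      = if t⁻¹ * a * t = g ∧ t⁻¹ * x = h then (χ a : k) else 0 := by
    intro x
    rw [Finset.sum_eq_single t]
    · simp
    · intro y _ hy; simp [hy]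
    · simp
  simp only [inner]
  rw [Finset.sum_eq_single (t * h)]
  · by_cases ha : t⁻¹ * a * t = g
    · have ha' : a = t * g * t⁻¹ := by rw [← ha]; group
      by_cases hb : b = t * h * t⁻¹
      · have hb' : (t * h)⁻¹ * b = t⁻¹ := by rw [hb]; group
        simp only [ha, hb', ha', and_true, if_true, mul_inv_cancel_left, inv_mul_cancel_left,
          eq_self_iff_true, true_and]
        have e1 : t⁻¹ * (t * g * t⁻¹) * t = g := by group
        have e2 : (t * h)⁻¹ * (t * g * t⁻¹) * (t * h) = h⁻¹ * g * h := by group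
        rw [e1, if_pos rfl, e2, if_pos hb, MonoidHom.inv_apply]
        push_cast
        rw [hconj h g]
        have e3 : (χ (t * g * t⁻¹) : k) = χ g := by
          rw [show t * g * t⁻¹ = (t⁻¹)⁻¹ * g * t⁻¹ by group]; exact hconj _ _
        rw [e3, mul_inv_cancel₀ (Units.ne_zero (χ g))]
      · have hb' : ¬ ((t * h)⁻¹ * b = t⁻¹) := by
          intro hc
          apply hb
          rw [← hc]; group
        simp only [hb, if_false]
        rw [if_neg hb']
        simp
    · have ha2 : ¬ (a = t * g * t⁻¹) := fun hc => ha (by rw [hc]; group)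
      simp [ha, ha2]
  · intro y _ hy
    have : ¬ (t⁻¹ * y = h) := by
      intro hc; exact hy (by rw [← hc]; group)
    simp [this]
  · simp

/-- Conjugation of `DG` by the group-like element `(χ, t)` (whose inverse is the
group-like element `(χ⁻¹, t⁻¹)`) sends `e_g × h` to `e_{tgt⁻¹} × tht⁻¹`; moreover two
such conjugations agree if and only if the corresponding inner automorphisms of `G`
agree, so the group of inner Hopf automorphisms of `DG` is isomorphic to `Inn(G)`. -/
theorem drinfeldDouble_inner_automorphisms
    (k G : Type*) [Field k] [IsAlgClosed k] [CharZero k]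
    [Group G] [Fintype G] [DecidableEq G] :
    (∀ (χ : G →* kˣ) (t g h : G),
      DDmul k G (DDmul k G (DDgroupLike k G χ t) (DDbasis k G g h))
          (DDgroupLike k G χ⁻¹ t⁻¹)
        = DDbasis k G (t * g * t⁻¹) (t * h * t⁻¹)) ∧
    (∀ (χ χ' : G →* kˣ) (t t' : G),
      ((∀ g h : G,
          DDmul k G (DDmul k G (DDgroupLike k G χ t) (DDbasis k G g h))
              (DDgroupLike k G χ⁻¹ t⁻¹)
            = DDmul k G (DDmul k G (DDgroupLike k G χ' t') (DDbasis k G g h))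
              (DDgroupLike k G χ'⁻¹ t'⁻¹))
        ↔ ∀ g : G, t * g * t⁻¹ = t' * g * t'⁻¹)) := by
  refine ⟨DDkey k G, ?_⟩
  intro χ χ' t t'
  constructor
  · intro H g
    have h1 := H g g
    rw [DDkey, DDkey] at h1
    have h2 := congrFun h1 (t * g * t⁻¹, t * g * t⁻¹)
    simp only [DDbasis, and_self, if_pos rfl, if_true] at h2
    by_contra hne
    rw [if_neg (by simp [hne])] at h2
    exact one_ne_zero h2
  · intro H g h
    rw [DDkey, DDkey, H g, H h]
end

section
/- Let G, H, H', C, C' be finite groups with isomorphisms G ≅ H × C and G ≅ H' × C'. If C ≅ C', then H ≅ H'. -/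
open Function

section Aux

/-- number of homomorphisms -/
noncomputable def DFChc (X G : Type*) [Group X] [Group G] : ℕ := Nat.card (X →* G)

/-- number of injective homomorphisms -/
noncomputable def DFCic (X G : Type*) [Group X] [Group G] : ℕ :=
  Nat.card {φ : X →* G // Injective φ}

variable {X G : Type*} [Group X] [Group G]

/-- postcomposition with an isomorphism -/
def DFCcompEquiv {A B : Type*} [Group A] [Group B] (g : A ≃* B) :
    (X →* A) ≃ (X →* B) where
  toFun φ := g.toMonoidHom.comp φ
  invFun ψ := g.symm.toMonoidHom.comp ψ
  left_inv φ := by ext x; simp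
  right_inv ψ := by ext x; simp

/-- homs into a product -/
def DFCprodEquiv (A B : Type*) [Group A] [Group B] :
    (X →* A × B) ≃ (X →* A) × (X →* B) where
  toFun φ := ⟨(MonoidHom.fst A B).comp φ, (MonoidHom.snd A B).comp φ⟩
  invFun p := p.1.prod p.2
  left_inv φ := by ext x <;> simp [MonoidHom.prod]
  right_inv p := by ext x <;> simp [MonoidHom.prod]

/-- homs with kernel `N` correspond to injective homs from the quotient -/
noncomputable def DFCfiberEquiv [Finite X] (N : Subgroup X) [N.Normal] :
    {φ : X →* G // φ.ker = N} ≃ {ψ : X ⧸ N →* G // Injective ψ} where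
  toFun := fun ⟨φ, h⟩ =>
    ⟨QuotientGroup.lift N φ (le_of_eq h.symm), by
      rw [← MonoidHom.ker_eq_bot_iff, eq_bot_iff]
      intro q hq
      induction q using QuotientGroup.induction_on with
      | H x =>
        have hx' : φ x = 1 := hq
        have hxN : x ∈ N := h ▸ hx'
        simpa [QuotientGroup.eq_one_iff] using hxN⟩
  invFun := fun ⟨ψ, hψ⟩ =>
    ⟨ψ.comp (QuotientGroup.mk' N), by
      rw [← MonoidHom.comap_ker, (MonoidHom.ker_eq_bot_iff ψ).mpr hψ]
      simp [QuotientGroup.ker_mk']⟩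
  left_inv := fun ⟨φ, h⟩ => by
    ext x
    simp
  right_inv := fun ⟨ψ, hψ⟩ => by
    ext x
    simp

lemma DFC_card_fiber [Finite X] (N : Subgroup X) [N.Normal] :
    Nat.card {φ : X →* G // φ.ker = N} = DFCic (X ⧸ N) G :=
  Nat.card_congr (DFCfiberEquiv N)

lemma DFC_card_fiber_bot :
    Nat.card {φ : X →* G // φ.ker = (⊥ : Subgroup X)} = DFCic X G :=
  Nat.card_congr (Equiv.subtypeEquivRight fun φ => MonoidHom.ker_eq_bot_iff φ)

lemma DFC_hc_eq_sum [Finite X] [Finite G] [Fintype {N : Subgroup X // N.Normal}] :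
    DFChc X G = ∑ N : {N : Subgroup X // N.Normal},
      Nat.card {φ : X →* G // φ.ker = N.1} := by
  classical
  have hfin : Finite (X →* G) := Finite.of_injective _ DFunLike.coe_injective
  have := Fintype.ofFinite (X →* G)
  have key : (Σ N : {N : Subgroup X // N.Normal}, {φ : X →* G // φ.ker = N.1}) ≃
      (X →* G) :=
    (Equiv.sigmaCongrRight fun N =>
        (Equiv.subtypeEquivRight fun φ => by
          constructor
          · intro h; exact Subtype.ext h
          · intro h; exact congrArg Subtype.val h)).trans
      (Equiv.sigmaFiberEquiv (fun φ : X →* G => (⟨φ.ker, inferInstance⟩ :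
        {N : Subgroup X // N.Normal})))
  have h1 : DFChc X G =
      Nat.card (Σ N : {N : Subgroup X // N.Normal}, {φ : X →* G // φ.ker = N.1}) :=
    (Nat.card_congr key).symm
  rw [h1, Nat.card_eq_fintype_card, Fintype.card_sigma]
  exact Finset.sum_congr rfl fun N _ => (Nat.card_eq_fintype_card).symm

lemma DFC_quot_card_lt [Finite X] (N : Subgroup X) (hN : N ≠ ⊥) :
    Nat.card (X ⧸ N) < Nat.card X := by
  have h1 : Nat.card X = Nat.card (X ⧸ N) * Nat.card N :=
    Subgroup.card_eq_card_quotient_mul_card_subgroup N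
  have h2 : 1 < Nat.card N := (Subgroup.one_lt_card_iff_ne_bot N).mpr hN
  have h3 : 0 < Nat.card (X ⧸ N) := Nat.card_pos
  calc Nat.card (X ⧸ N) = Nat.card (X ⧸ N) * 1 := (mul_one _).symm
    _ < Nat.card (X ⧸ N) * Nat.card N := (Nat.mul_lt_mul_left h3).mpr h2
    _ = Nat.card X := h1.symm

end Aux

section Main

variable {H H' : Type*} [Group H] [Group H'] [Finite H] [Finite H']

lemma DFC_ic_eq (hh : ∀ (X : Type) [Group X] [Finite X], DFChc X H = DFChc X H') :
    ∀ (n : ℕ) (X : Type) [Group X] [Finite X], Nat.card X = n →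
      DFCic X H = DFCic X H' := by
  intro n
  induction n using Nat.strong_induction_on with
  | _ n ih =>
    intro X _ _ hX
    classical
    have := Fintype.ofFinite {N : Subgroup X // N.Normal}
    set S : Finset {N : Subgroup X // N.Normal} :=
      Finset.univ.erase ⟨⊥, inferInstance⟩ with hS
    have h1 : DFChc X H = DFCic X H +
        ∑ N ∈ S, Nat.card {φ : X →* H // φ.ker = N.1} := by
      rw [DFC_hc_eq_sum, ← Finset.add_sum_erase Finset.univ _
        (Finset.mem_univ (⟨⊥, inferInstance⟩ : {N : Subgroup X // N.Normal})),
        DFC_card_fiber_bot]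
    have h2 : DFChc X H' = DFCic X H' +
        ∑ N ∈ S, Nat.card {φ : X →* H' // φ.ker = N.1} := by
      rw [DFC_hc_eq_sum, ← Finset.add_sum_erase Finset.univ _
        (Finset.mem_univ (⟨⊥, inferInstance⟩ : {N : Subgroup X // N.Normal})),
        DFC_card_fiber_bot]
    have hrest : (∑ N ∈ S, Nat.card {φ : X →* H // φ.ker = N.1}) =
        ∑ N ∈ S, Nat.card {φ : X →* H' // φ.ker = N.1} := by
      refine Finset.sum_congr rfl fun N hN => ?_
      have hNbot : N.1 ≠ ⊥ := fun h => Finset.ne_of_mem_erase hN (Subtype.ext h)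
      have : N.1.Normal := N.2
      rw [DFC_card_fiber N.1, DFC_card_fiber N.1]
      have hlt : Nat.card (X ⧸ N.1) < n := hX ▸ DFC_quot_card_lt N.1 hNbot
      exact ih _ hlt (X ⧸ N.1) rfl
    have := hh X
    omega

end Main

/-- Cancellation for direct products of finite groups: if `G ≅ H × C` and
`G ≅ H' × C'` with `C ≅ C'`, then `H ≅ H'`. -/
theorem directFactor_cancellation
    (G H H' C C' : Type*) [Group G] [Group H] [Group H'] [Group C] [Group C']
    [Finite G] [Finite H] [Finite H'] [Finite C] [Finite C']
    (e : G ≃* H × C) (e' : G ≃* H' × C') (f : C ≃* C') :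
    Nonempty (H ≃* H') := by
  classical
  -- hom counts agree
  have hh : ∀ (X : Type) [Group X] [Finite X], DFChc X H = DFChc X H' := by
    intro X _ _
    have key : DFChc X H * DFChc X C = DFChc X H' * DFChc X C' := by
      have h1 : DFChc X G = DFChc X H * DFChc X C := by
        unfold DFChc
        rw [Nat.card_congr (DFCcompEquiv e), Nat.card_congr (DFCprodEquiv H C),
          Nat.card_prod]
      have h2 : DFChc X G = DFChc X H' * DFChc X C' := by
        unfold DFChc
        rw [Nat.card_congr (DFCcompEquiv e'), Nat.card_congr (DFCprodEquiv H' C'),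
          Nat.card_prod]
      rw [← h1, h2]
    have hc : DFChc X C = DFChc X C' := Nat.card_congr (DFCcompEquiv f)
    have hfin : Finite (X →* C') := Finite.of_injective _ DFunLike.coe_injective
    have hpos : 0 < DFChc X C' := by unfold DFChc; exact Nat.card_pos
    rw [hc] at key
    exact Nat.eq_of_mul_eq_mul_right hpos key
  -- cardinalities agree
  have hcard : Nat.card H = Nat.card H' := by
    have h1 : Nat.card G = Nat.card H * Nat.card C := by
      rw [Nat.card_congr e.toEquiv, Nat.card_prod]
    have h2 : Nat.card G = Nat.card H' * Nat.card C' := by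
      rw [Nat.card_congr e'.toEquiv, Nat.card_prod]
    have h3 : Nat.card C = Nat.card C' := Nat.card_congr f.toEquiv
    have hpos : 0 < Nat.card C' := Nat.card_pos
    rw [h3] at h1
    exact Nat.eq_of_mul_eq_mul_right hpos (h1.symm.trans h2)
  -- shrink H to a group in `Type 0`
  let X : Type := Shrink.{0} H
  let eX : X ≃* H := Shrink.mulEquiv
  haveI : Finite X := Finite.of_equiv H eX.symm.toEquiv
  -- equal injective-hom counts
  have hic : DFCic X H = DFCic X H' := DFC_ic_eq hh (Nat.card X) X rfl
  have hfinH' : Finite (X →* H') := Finite.of_injective _ DFunLike.coe_injective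
  have hposH : 0 < DFCic X H := by
    have : Nonempty {φ : X →* H // Injective φ} := ⟨⟨eX.toMonoidHom, eX.injective⟩⟩
    have : Finite (X →* H) := Finite.of_injective _ DFunLike.coe_injective
    exact Nat.card_pos
  rw [hic] at hposH
  have hne : Nonempty {φ : X →* H' // Injective φ} := by
    have h0 : DFCic X H' ≠ 0 := hposH.ne'
    exact (Nat.card_ne_zero.mp h0).1
  obtain ⟨ψ, hψ⟩ := hne
  -- compose to get an injective hom `H →* H'`, bijective by cardinality
  let χ : H →* H' := ψ.comp eX.symm.toMonoidHom
  have hχ : Injective χ := hψ.comp eX.symm.injective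
  have hbij : Bijective χ := (Nat.bijective_iff_injective_and_card χ).mpr ⟨hχ, hcard⟩
  exact ⟨MulEquiv.ofBijective χ hbij⟩
end

section
/- Let G = H × C be a finite group with H a subgroup and C a central (abelian) subgroup. Suppose there is a group homomorphism v : C → H with central image and a homomorphism v' : H → C such that v' ∘ v is an automorphism of C. Then C is isomorphic to a direct factor of H; in particular, if H is purely non-abelian and C is nontrivial, this is a contradiction. -/
/-- Suppose `v : C → H` is a homomorphism with central image and `v' : H → C` is a
homomorphism such that `v' ∘ v` is an automorphism of `C`.  Then the short exact
sequence `1 → ker(v') → H → C → 1` splits centrally and `C` is isomorphic to a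
direct factor of `H`: `H ≅ ker(v') × C`.  In particular a purely non-abelian `H`
admits no such maps for nontrivial `C`. -/
theorem central_splitting_direct_factor
    (H C : Type*) [Group H] [CommGroup C] [Finite H] [Finite C]
    (v : C →* H) (hv : ∀ c : C, v c ∈ Subgroup.center H)
    (v' : H →* C) (hbij : Function.Bijective (v'.comp v)) :
    Nonempty (H ≃* v'.ker × C) := by
  let e : C ≃* C := MulEquiv.ofBijective (v'.comp v) hbij
  let s : C →* H := v.comp e.symm.toMonoidHom
  have hsc : ∀ c, s c ∈ Subgroup.center H := fun c => hv _
  have hcomm : ∀ c (h : H), Commute h (s c) := fun c h =>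
    (Subgroup.mem_center_iff.mp (hsc c) h)
  have hs : ∀ c, v' (s c) = c := by
    intro c
    show v' (v (e.symm c)) = c
    have : (v'.comp v) (e.symm c) = c := e.apply_symm_apply c
    simpa using this
  have hker : ∀ h : H, h * (s (v' h))⁻¹ ∈ v'.ker := by
    intro h
    simp [MonoidHom.mem_ker, hs]
  refine ⟨{
    toFun := fun h => (⟨h * (s (v' h))⁻¹, hker h⟩, v' h),
    invFun := fun p => p.1.1 * s p.2,
    left_inv := by intro h; simp,
    right_inv := by
      rintro ⟨⟨k, hk⟩, c⟩
      have hk' : v' k = 1 := hk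
      ext
      · show k * s c * (s (v' (k * s c)))⁻¹ = k
        simp [map_mul, hk', hs]
      · show v' (k * s c) = c
        simp [map_mul, hk', hs]
    map_mul' := by
      intro h1 h2
      ext
      · show h1 * h2 * (s (v' (h1 * h2)))⁻¹ =
          (h1 * (s (v' h1))⁻¹) * (h2 * (s (v' h2))⁻¹)
        rw [map_mul, map_mul, mul_inv_rev, mul_assoc h1, mul_assoc h1]
        congr 1
        rw [← mul_assoc]
        exact ((hcomm (v' h1) (h2 * (s (v' h2))⁻¹)).inv_right).eq
      · show v' (h1 * h2) = v' h1 * v' h2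
        simp [map_mul] }⟩
end
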